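/- Let g(A) = g̃(A)/r be the quotient by the maximal ideal intersecting h trivially. If x lies in the positive part n⁺ of g(A) and [g_{−α}, x] = 0 for every simple root α, then x = 0; similarly for y in n⁻ with [g_{α}, y] = 0 for all simple α. -/

import Mathlib

/-- A complex Lie superalgebra, presented as a module with a ℤ/2-grading
(`even`/`odd` complementary submodules) and a bilinear bracket satisfying
super skew-symmetry and the super Jacobi identity (stated case by case on
homogeneous elements). -/
structure SuperLie (L : Type*) [AddCommGroup L] [Module ℂ L] where
  even : Submodule ℂ L
  odd : Submodule ℂ L
  bracket : L →ₗ[ℂ] L →ₗ[ℂ] L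
  compl : IsCompl even odd
  ee_mem : ∀ x ∈ even, ∀ y ∈ even, bracket x y ∈ even
  eo_mem : ∀ x ∈ even, ∀ y ∈ odd, bracket x y ∈ odd
  oe_mem : ∀ x ∈ odd, ∀ y ∈ even, bracket x y ∈ odd
  oo_mem : ∀ x ∈ odd, ∀ y ∈ odd, bracket x y ∈ even
  skew_e : ∀ x ∈ even, ∀ y : L, bracket x y = - bracket y x
  symm_oo : ∀ x ∈ odd, ∀ y ∈ odd, bracket x y = bracket y x
  jacobi_e : ∀ x ∈ even, ∀ y z : L,
    bracket x (bracket y z) = bracket (bracket x y) z + bracket y (bracket x z)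
  jacobi_oe : ∀ x ∈ odd, ∀ y ∈ even, ∀ z : L,
    bracket x (bracket y z) = bracket (bracket x y) z + bracket y (bracket x z)
  jacobi_oo : ∀ x ∈ odd, ∀ y ∈ odd, ∀ z : L,
    bracket x (bracket y z) = bracket (bracket x y) z - bracket y (bracket x z)

/-- A submodule is an ideal for the bracket `b` if it absorbs brackets on both sides. -/
def IsBracketIdeal {L : Type*} [AddCommGroup L] [Module ℂ L]
    (b : L →ₗ[ℂ] L →ₗ[ℂ] L) (I : Submodule ℂ L) : Prop :=
  ∀ a : L, ∀ v ∈ I, b a v ∈ I ∧ b v a ∈ I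

/-- The subalgebra (smallest bracket-closed submodule) generated by a subspace `P`. -/
def lieSpan {L : Type*} [AddCommGroup L] [Module ℂ L]
    (b : L →ₗ[ℂ] L →ₗ[ℂ] L) (P : Submodule ℂ L) : Submodule ℂ L :=
  sInf {N | P ≤ N ∧ ∀ x ∈ N, ∀ y ∈ N, b x y ∈ N}

/-- `adPow b S T k` is the span of `[S,[S,…,[S,T]…]]` (`k` brackets); used to express
the integrability condition `(ad 𝔤_α)^k 𝔤_β = 0`. -/
def adPow {L : Type*} [AddCommGroup L] [Module ℂ L]
    (b : L →ₗ[ℂ] L →ₗ[ℂ] L) (S T : Submodule ℂ L) : ℕ → Submodule ℂ L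
  | 0 => T
  | k + 1 => Submodule.span ℂ {z | ∃ x ∈ S, ∃ w ∈ adPow b S T k, z = b x w}

/-- A **Cartan datum**, realized inside an ambient Lie superalgebra `L`:
a finite-dimensional quasi-toral subalgebra `𝔥 = hE ⊕ hO`, linearly independent simple
roots `α_1,…,α_n ∈ 𝔱*` (`𝔱 = hE`, each `alpha i` recorded as a functional on `L` whose
restriction to `hE` is the weight), graded `𝔥`-submodules `𝔤_{±α_i} = gp i, gm i` which are
weight spaces of weight `±α_i`, with `[𝔤_{α_i}, 𝔤_{-α_i}] ⊆ 𝔥`, `[𝔤_{α_i}, 𝔤_{-α_j}] = 0`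
for `i ≠ j`, and the pairing `𝔤_{α_i} ⊗ 𝔤_{-α_i} → 𝔥` nondegenerate. -/
structure CartanDatum (L : Type*) [AddCommGroup L] [Module ℂ L] where
  sl : SuperLie L
  hE : Submodule ℂ L
  hO : Submodule ℂ L
  hE_le : hE ≤ sl.even
  hO_le : hO ≤ sl.odd
  hfd : FiniteDimensional ℂ ↥(hE ⊔ hO)
  quasitoral : ∀ t ∈ hE, ∀ z ∈ hE ⊔ hO, sl.bracket t z = 0
  brOO : ∀ a ∈ hO, ∀ b ∈ hO, sl.bracket a b ∈ hE
  n : ℕ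
  alpha : Fin n → (L →ₗ[ℂ] ℂ)
  indep : LinearIndependent ℂ fun i => (alpha i).domRestrict hE
  gp : Fin n → Submodule ℂ L
  gm : Fin n → Submodule ℂ L
  gp_fd : ∀ i, FiniteDimensional ℂ ↥(gp i)
  gm_fd : ∀ i, FiniteDimensional ℂ ↥(gm i)
  gp_graded : ∀ i, gp i = (gp i ⊓ sl.even) ⊔ (gp i ⊓ sl.odd)
  gm_graded : ∀ i, gm i = (gm i ⊓ sl.even) ⊔ (gm i ⊓ sl.odd)
  gp_wt : ∀ i, ∀ t ∈ hE, ∀ v ∈ gp i, sl.bracket t v = alpha i t • v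
  gm_wt : ∀ i, ∀ t ∈ hE, ∀ v ∈ gm i, sl.bracket t v = -(alpha i t) • v
  gp_mod : ∀ i, ∀ t ∈ hE ⊔ hO, ∀ v ∈ gp i, sl.bracket t v ∈ gp i
  gm_mod : ∀ i, ∀ t ∈ hE ⊔ hO, ∀ v ∈ gm i, sl.bracket t v ∈ gm i
  pair_mem : ∀ i, ∀ x ∈ gp i, ∀ y ∈ gm i, sl.bracket x y ∈ hE ⊔ hO
  pair_ne : ∀ i j, i ≠ j → ∀ x ∈ gp i, ∀ y ∈ gm j, sl.bracket x y = 0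
  nondeg_p : ∀ i, ∀ U : Submodule ℂ L, U ≤ gp i → U ≠ ⊥ →
    (∀ t ∈ hE ⊔ hO, ∀ u ∈ U, sl.bracket t u ∈ U) →
    ∃ u ∈ U, ∃ v ∈ gm i, sl.bracket u v ≠ 0
  nondeg_m : ∀ i, ∀ U : Submodule ℂ L, U ≤ gm i → U ≠ ⊥ →
    (∀ t ∈ hE ⊔ hO, ∀ u ∈ U, sl.bracket t u ∈ U) →
    ∃ u ∈ U, ∃ v ∈ gp i, sl.bracket v u ≠ 0

namespace CartanDatum

variable {L : Type*} [AddCommGroup L] [Module ℂ L] (D : CartanDatum L)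

/-- The Cartan subalgebra `𝔥`. -/
def h : Submodule ℂ L := D.hE ⊔ D.hO

/-- The generating subspace `𝒞 = ⊕ᵢ 𝔤_{-α_i} ⊕ 𝔥 ⊕ ⊕ᵢ 𝔤_{α_i}`. -/
def genC : Submodule ℂ L := D.h ⊔ ((⨆ i, D.gp i) ⊔ (⨆ i, D.gm i))

/-- The positive part `𝔫⁺`: the subalgebra generated by the `𝔤_{α_i}`. -/
def Np : Submodule ℂ L := lieSpan D.sl.bracket (⨆ i, D.gp i)

/-- The negative part `𝔫⁻`. -/
def Nm : Submodule ℂ L := lieSpan D.sl.bracket (⨆ i, D.gm i)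

/-- The coroot space `𝔥_{α_i} = [𝔤_{α_i}, 𝔤_{-α_i}]`. -/
def coroot (i : Fin D.n) : Submodule ℂ L :=
  Submodule.span ℂ {z | ∃ x ∈ D.gp i, ∃ y ∈ D.gm i, z = D.sl.bracket x y}

/-- `D.Presented` says the ambient algebra *is* `𝔤̃(𝒜)`: it satisfies the universal
property of the presentation with generators `𝒞` and the defining relations.  Any
linear map to a Lie superalgebra `M` which respects, on `𝒞`, the parity, the bracket of
`𝔥`, the `𝔥`-module structure of the `𝔤_{±α_i}`, the pairings `[𝔤_{α_i}, 𝔤_{-α_i}]`, and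
kills the mixed pairings, extends uniquely to a morphism of Lie superalgebras. -/
def Presented : Prop :=
  ∀ (M : Type*) [AddCommGroup M] [Module ℂ M] (sM : SuperLie M) (f : L →ₗ[ℂ] M),
    (∀ a ∈ D.h, ∀ b ∈ D.h, f (D.sl.bracket a b) = sM.bracket (f a) (f b)) →
    (∀ i, ∀ t ∈ D.h, ∀ v ∈ D.gp i, f (D.sl.bracket t v) = sM.bracket (f t) (f v)) →
    (∀ i, ∀ t ∈ D.h, ∀ v ∈ D.gm i, f (D.sl.bracket t v) = sM.bracket (f t) (f v)) →
    (∀ i, ∀ x ∈ D.gp i, ∀ y ∈ D.gm i, f (D.sl.bracket x y) = sM.bracket (f x) (f y)) →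
    (∀ i j, i ≠ j → ∀ x ∈ D.gp i, ∀ y ∈ D.gm j, sM.bracket (f x) (f y) = 0) →
    (∀ v ∈ D.genC, v ∈ D.sl.even → f v ∈ sM.even) →
    (∀ v ∈ D.genC, v ∈ D.sl.odd → f v ∈ sM.odd) →
    ∃! F : L →ₗ[ℂ] M,
      (∀ a b : L, F (D.sl.bracket a b) = sM.bracket (F a) (F b)) ∧
      (∀ v ∈ D.sl.even, F v ∈ sM.even) ∧ (∀ v ∈ D.sl.odd, F v ∈ sM.odd) ∧
      (∀ v ∈ D.genC, F v = f v)

/-- `D.Reduced` says the ambient algebra *is* `𝔤(𝒜) = 𝔤̃(𝒜)/𝔯`: it has no nonzero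
ideal intersecting `𝔥` trivially. -/
def Reduced : Prop :=
  ∀ I : Submodule ℂ L, IsBracketIdeal D.sl.bracket I → I ⊓ D.h = ⊥ → I = ⊥

/-- The triangular decomposition property `𝔤 = 𝔫⁻ ⊕ 𝔥 ⊕ 𝔫⁺` (as a sum). -/
def Triangular : Prop := D.Nm ⊔ (D.h ⊔ D.Np) = ⊤

end CartanDatum

/-!
Let `x ∈ 𝔫⁺` be homogeneous with `[𝔤_{-α_i}, x] = 0`, and let `J` be the submodule generated from
`x` by the brackets with `𝔥 ⊕ 𝔫⁺`; it lies in `𝔫⁺` and is graded. Since `[𝔤_{-α_i}, 𝔥] ⊆ 𝔤_{-α_i}`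
and `[𝔤_{-α_i}, 𝔤_{α_j}] ⊆ 𝔥`, the Jacobi identity shows that `J` is stable under the
`𝔤_{-α_i}` too, hence under `𝔫⁻ ⊕ 𝔥 ⊕ 𝔫⁺ = 𝔤`, so `J` is an ideal. But `𝔫⁺` is contained in
the sum of the weight spaces of the nonzero weights `∑ cᵢ αᵢ` (`cᵢ ∈ ℕ`), which is independent
from the zero weight space containing `𝔥`; so `J ∩ 𝔥 = 0` and `J = 0`. A general `x` is handled
through its even and odd components.
-/

section lieSpan

variable {L : Type*} [AddCommGroup L] [Module ℂ L] {b : L →ₗ[ℂ] L →ₗ[ℂ] L}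

lemma le_lieSpan (P : Submodule ℂ L) : P ≤ lieSpan b P :=
  le_sInf fun _ hN => hN.1

lemma lieSpan_le {P N : Submodule ℂ L} (hP : P ≤ N) (hN : ∀ x ∈ N, ∀ y ∈ N, b x y ∈ N) :
    lieSpan b P ≤ N :=
  sInf_le ⟨hP, hN⟩

lemma bracket_mem_lieSpan {P : Submodule ℂ L} {x y : L} (hx : x ∈ lieSpan b P)
    (hy : y ∈ lieSpan b P) : b x y ∈ lieSpan b P :=
  Submodule.mem_sInf.mpr fun N hN =>
    hN.2 x (Submodule.mem_sInf.mp hx N hN) y (Submodule.mem_sInf.mp hy N hN)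

end lieSpan

namespace SuperLie

variable {L : Type*} [AddCommGroup L] [Module ℂ L] (sl : SuperLie L)

def IsHomogeneous (a : L) : Prop := a ∈ sl.even ∨ a ∈ sl.odd

def gradedPart (S : Submodule ℂ L) : Submodule ℂ L := S ⊓ sl.even ⊔ S ⊓ sl.odd

def IsGraded (S : Submodule ℂ L) : Prop := S ≤ sl.gradedPart S

def leftStabilizer (T : Submodule ℂ L) : Submodule ℂ L := ⨅ v ∈ T, T.comap (sl.bracket.flip v)

variable {sl}

lemma mem_leftStabilizer {T : Submodule ℂ L} {a : L} :
    a ∈ sl.leftStabilizer T ↔ ∀ v ∈ T, sl.bracket a v ∈ T := by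
  simp [leftStabilizer]

lemma gradedPart_le (S : Submodule ℂ L) : sl.gradedPart S ≤ S :=
  sup_le inf_le_left inf_le_left

lemma gradedPart_mono {S T : Submodule ℂ L} (h : S ≤ T) : sl.gradedPart S ≤ sl.gradedPart T :=
  sup_le_sup (inf_le_inf_right _ h) (inf_le_inf_right _ h)

lemma mem_gradedPart {S : Submodule ℂ L} {a : L} (ha : a ∈ S) (hh : sl.IsHomogeneous a) :
    a ∈ sl.gradedPart S :=
  hh.elim (fun he => Submodule.mem_sup_left ⟨ha, he⟩) fun ho => Submodule.mem_sup_right ⟨ha, ho⟩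

lemma isGraded_gradedPart (S : Submodule ℂ L) : sl.IsGraded (sl.gradedPart S) :=
  sup_le (fun _ ha => mem_gradedPart (Submodule.mem_sup_left ha) (Or.inl ha.2))
    fun _ ha => mem_gradedPart (Submodule.mem_sup_right ha) (Or.inr ha.2)

lemma IsGraded.le_of_homogeneous {S N : Submodule ℂ L} (hS : sl.IsGraded S)
    (h : ∀ a ∈ S, sl.IsHomogeneous a → a ∈ N) : S ≤ N :=
  hS.trans <| sup_le (fun a ha => h a ha.1 (Or.inl ha.2)) fun a ha => h a ha.1 (Or.inr ha.2)

lemma isGraded_of_le_even {S : Submodule ℂ L} (h : S ≤ sl.even) : sl.IsGraded S :=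
  fun _ ha => mem_gradedPart ha (Or.inl (h ha))

lemma isGraded_of_le_odd {S : Submodule ℂ L} (h : S ≤ sl.odd) : sl.IsGraded S :=
  fun _ ha => mem_gradedPart ha (Or.inr (h ha))

lemma isGraded_top : sl.IsGraded ⊤ := by
  simp [IsGraded, gradedPart, sl.compl.sup_eq_top]

lemma IsGraded.sup {S T : Submodule ℂ L} (hS : sl.IsGraded S) (hT : sl.IsGraded T) :
    sl.IsGraded (S ⊔ T) :=
  sup_le (hS.trans (gradedPart_mono le_sup_left)) (hT.trans (gradedPart_mono le_sup_right))

lemma isGraded_iSup {ι : Sort*} {S : ι → Submodule ℂ L} (hS : ∀ i, sl.IsGraded (S i)) :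
    sl.IsGraded (⨆ i, S i) :=
  iSup_le fun i => (hS i).trans (gradedPart_mono (le_iSup S i))

lemma IsHomogeneous.bracket {a b : L} (ha : sl.IsHomogeneous a) (hb : sl.IsHomogeneous b) :
    sl.IsHomogeneous (sl.bracket a b) := by
  rcases ha with ha | ha <;> rcases hb with hb | hb
  · exact Or.inl (sl.ee_mem a ha b hb)
  · exact Or.inr (sl.eo_mem a ha b hb)
  · exact Or.inr (sl.oe_mem a ha b hb)
  · exact Or.inl (sl.oo_mem a ha b hb)

lemma exists_bracket_eq_smul_bracket {a b : L} (ha : sl.IsHomogeneous a) (hb : sl.IsHomogeneous b) :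
    ∃ ε : ℂ, sl.bracket a b = ε • sl.bracket b a := by
  rcases ha with ha | ha
  · exact ⟨-1, by rw [sl.skew_e a ha b, neg_one_smul]⟩
  rcases hb with hb | hb
  · exact ⟨-1, by rw [sl.skew_e b hb a, neg_one_smul, neg_neg]⟩
  · exact ⟨1, by rw [sl.symm_oo a ha b hb, one_smul]⟩

lemma exists_jacobi {a b : L} (ha : sl.IsHomogeneous a) (hb : sl.IsHomogeneous b) (c : L) :
    ∃ ε : ℂ, sl.bracket a (sl.bracket b c) =
      sl.bracket (sl.bracket a b) c + ε • sl.bracket b (sl.bracket a c) := by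
  rcases ha with ha | ha
  · exact ⟨1, by rw [sl.jacobi_e a ha b c, one_smul]⟩
  rcases hb with hb | hb
  · exact ⟨1, by rw [sl.jacobi_oe a ha b hb c, one_smul]⟩
  · exact ⟨-1, by rw [sl.jacobi_oo a ha b hb c, neg_one_smul, sub_eq_add_neg]⟩

lemma bracket_mem_of_swap {N : Submodule ℂ L} {a b : L} (ha : sl.IsHomogeneous a)
    (hb : sl.IsHomogeneous b) (h : sl.bracket b a ∈ N) : sl.bracket a b ∈ N := by
  obtain ⟨ε, e⟩ := exists_bracket_eq_smul_bracket ha hb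
  exact e ▸ N.smul_mem ε h

lemma bracket_bracket_mem {N : Submodule ℂ L} {a b : L} (ha : sl.IsHomogeneous a)
    (hb : sl.IsHomogeneous b) {c : L} (h₁ : sl.bracket (sl.bracket a b) c ∈ N)
    (h₂ : sl.bracket b (sl.bracket a c) ∈ N) : sl.bracket a (sl.bracket b c) ∈ N := by
  obtain ⟨ε, e⟩ := exists_jacobi ha hb c
  exact e ▸ N.add_mem h₁ (N.smul_mem ε h₂)

lemma bracket_bracket_left_mem {N : Submodule ℂ L} {a b : L} (ha : sl.IsHomogeneous a)
    (hb : sl.IsHomogeneous b) {c : L} (h₁ : sl.bracket a (sl.bracket b c) ∈ N)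
    (h₂ : sl.bracket b (sl.bracket a c) ∈ N) : sl.bracket (sl.bracket a b) c ∈ N := by
  obtain ⟨ε, e⟩ := exists_jacobi ha hb c
  rw [eq_sub_of_add_eq e.symm]
  exact N.sub_mem h₁ (N.smul_mem ε h₂)

lemma bracket_mem_of_homogeneous {S T N : Submodule ℂ L} (hS : sl.IsGraded S)
    (hT : sl.IsGraded T)
    (h : ∀ a ∈ S, ∀ b ∈ T, sl.IsHomogeneous a → sl.IsHomogeneous b → sl.bracket a b ∈ N) :
    ∀ a ∈ S, ∀ b ∈ T, sl.bracket a b ∈ N := by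
  have hT' : ∀ a ∈ S, sl.IsHomogeneous a → T ≤ N.comap (sl.bracket a) := fun a ha hah =>
    hT.le_of_homogeneous fun b hb hbh => h a ha b hb hah hbh
  intro a ha b hb
  exact hS.le_of_homogeneous (N := N.comap (sl.bracket.flip b))
    (fun a' ha' hah' => hT' a' ha' hah' hb) ha

lemma bracket_mem_swap {S T N : Submodule ℂ L} (hS : sl.IsGraded S) (hT : sl.IsGraded T)
    (h : ∀ a ∈ S, ∀ b ∈ T, sl.bracket a b ∈ N) : ∀ b ∈ T, ∀ a ∈ S, sl.bracket b a ∈ N :=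
  bracket_mem_of_homogeneous hT hS fun b hb a ha hbh hah =>
    bracket_mem_of_swap hbh hah (h a ha b hb)

lemma IsGraded.isBracketIdeal {J : Submodule ℂ L} (hJ : sl.IsGraded J)
    (h : sl.leftStabilizer J = ⊤) : IsBracketIdeal sl.bracket J := by
  have hl : ∀ a, ∀ v ∈ J, sl.bracket a v ∈ J := fun a =>
    mem_leftStabilizer.mp (h ▸ Submodule.mem_top : a ∈ sl.leftStabilizer J)
  exact fun a v hv => ⟨hl a v hv,
    bracket_mem_swap isGraded_top hJ (fun a _ v hv => hl a v hv) v hv a Submodule.mem_top⟩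

lemma eq_zero_of_even_add_odd_eq_zero {u v : L} (hu : u ∈ sl.even) (hv : v ∈ sl.odd)
    (h : u + v = 0) : u = 0 ∧ v = 0 := by
  have hu0 : u = 0 := Submodule.disjoint_def.mp sl.compl.disjoint u hu
    (eq_neg_of_add_eq_zero_left h ▸ sl.odd.neg_mem hv)
  exact ⟨hu0, by simpa [hu0] using h⟩

lemma IsGraded.lieSpan_le_gradedPart {P N : Submodule ℂ L} (hP : sl.IsGraded P) (hPN : P ≤ N)
    (hN : ∀ x ∈ N, ∀ y ∈ N, sl.IsHomogeneous x → sl.IsHomogeneous y → sl.bracket x y ∈ N) :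
    lieSpan sl.bracket P ≤ sl.gradedPart N :=
  lieSpan_le (hP.le_of_homogeneous fun _ ha hah => mem_gradedPart (hPN ha) hah)
    (bracket_mem_of_homogeneous (isGraded_gradedPart N) (isGraded_gradedPart N)
      fun x hx y hy hxh hyh => mem_gradedPart
        (hN x (gradedPart_le N hx) y (gradedPart_le N hy) hxh hyh) (hxh.bracket hyh))

lemma IsGraded.lieSpan_le {P N : Submodule ℂ L} (hP : sl.IsGraded P) (hPN : P ≤ N)
    (hN : ∀ x ∈ N, ∀ y ∈ N, sl.IsHomogeneous x → sl.IsHomogeneous y → sl.bracket x y ∈ N) :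
    lieSpan sl.bracket P ≤ N :=
  (hP.lieSpan_le_gradedPart hPN hN).trans (gradedPart_le N)

lemma IsGraded.isGraded_lieSpan {P : Submodule ℂ L} (hP : sl.IsGraded P) :
    sl.IsGraded (lieSpan sl.bracket P) :=
  hP.lieSpan_le_gradedPart (le_lieSpan P) fun _ hx _ hy _ _ => bracket_mem_lieSpan hx hy

lemma IsGraded.lieSpan_le_leftStabilizer {P T : Submodule ℂ L} (hP : sl.IsGraded P)
    (h : P ≤ sl.leftStabilizer T) : lieSpan sl.bracket P ≤ sl.leftStabilizer T :=
  hP.lieSpan_le h fun _ ha _ hb hah hbh => mem_leftStabilizer.mpr fun v hv =>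
    bracket_bracket_left_mem hah hbh (mem_leftStabilizer.mp ha _ (mem_leftStabilizer.mp hb v hv))
      (mem_leftStabilizer.mp hb _ (mem_leftStabilizer.mp ha v hv))

/-- The bracket with a homogeneous `t` is a superderivation. -/
lemma IsGraded.mem_leftStabilizer_lieSpan {P : Submodule ℂ L} (hP : sl.IsGraded P) {t : L}
    (ht : sl.IsHomogeneous t) (h : ∀ p ∈ P, sl.bracket t p ∈ lieSpan sl.bracket P) :
    t ∈ sl.leftStabilizer (lieSpan sl.bracket P) := by
  have hle : lieSpan sl.bracket P ≤
      lieSpan sl.bracket P ⊓ (lieSpan sl.bracket P).comap (sl.bracket t) :=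
    hP.lieSpan_le (le_inf (le_lieSpan P) h) fun x hx y hy hxh _ =>
      ⟨bracket_mem_lieSpan hx.1 hy.1,
        bracket_bracket_mem ht hxh (bracket_mem_lieSpan hx.2 hy.1)
          (bracket_mem_lieSpan hx.1 hy.2)⟩
  exact mem_leftStabilizer.mpr fun v hv => (hle hv).2

variable (sl) in
def adSpan (A : Submodule ℂ L) (x : L) : Submodule ℂ L :=
  sInf {N | x ∈ N ∧ A ≤ sl.leftStabilizer N}

lemma mem_adSpan_self (A : Submodule ℂ L) (x : L) : x ∈ sl.adSpan A x :=
  Submodule.mem_sInf.mpr fun _ hN => hN.1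

lemma le_leftStabilizer_adSpan (A : Submodule ℂ L) (x : L) :
    A ≤ sl.leftStabilizer (sl.adSpan A x) := fun _ ha =>
  mem_leftStabilizer.mpr fun _ hv => Submodule.mem_sInf.mpr fun N hN =>
    mem_leftStabilizer.mp (hN.2 ha) _ (Submodule.mem_sInf.mp hv N hN)

lemma adSpan_le {A N : Submodule ℂ L} {x : L} (hx : x ∈ N) (hA : A ≤ sl.leftStabilizer N) :
    sl.adSpan A x ≤ N :=
  sInf_le ⟨hx, hA⟩

lemma IsGraded.isGraded_adSpan {A : Submodule ℂ L} (hA : sl.IsGraded A) {x : L}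
    (hx : sl.IsHomogeneous x) : sl.IsGraded (sl.adSpan A x) :=
  adSpan_le (mem_gradedPart (mem_adSpan_self A x) hx) fun a ha =>
    mem_leftStabilizer.mpr fun v hv =>
      bracket_mem_of_homogeneous hA (isGraded_gradedPart _)
        (fun _ ha v hv hah hvh => mem_gradedPart
          (mem_leftStabilizer.mp (le_leftStabilizer_adSpan A x ha) v (gradedPart_le _ hv))
          (hah.bracket hvh)) a ha v hv

variable (sl) in
def colon (Q J : Submodule ℂ L) : Submodule ℂ L := ⨅ q ∈ Q, J.comap (sl.bracket q)

lemma mem_colon {Q J : Submodule ℂ L} {v : L} :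
    v ∈ sl.colon Q J ↔ ∀ q ∈ Q, sl.bracket q v ∈ J := by
  simp [colon]

lemma IsGraded.mem_leftStabilizer_inf_colon {Q J : Submodule ℂ L} (hQ : sl.IsGraded Q) {a : L}
    (ha : sl.IsHomogeneous a) (haJ : a ∈ sl.leftStabilizer J)
    (h : ∀ v ∈ J ⊓ sl.colon Q J, ∀ q ∈ Q, sl.bracket (sl.bracket q a) v ∈ J) :
    a ∈ sl.leftStabilizer (J ⊓ sl.colon Q J) := by
  refine mem_leftStabilizer.mpr fun v hv => ⟨mem_leftStabilizer.mp haJ v hv.1, ?_⟩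
  exact mem_colon.mpr <| hQ.le_of_homogeneous (N := J.comap (sl.bracket.flip _))
    fun q hq hqh => bracket_bracket_mem hqh ha (h v hv q hq)
      (mem_leftStabilizer.mp haJ _ (mem_colon.mp hv.2 q hq))

lemma bracket_eq_zero_of_mem_iSup {ι : Sort*} {S : ι → Submodule ℂ L} {x : L}
    (h : ∀ i, ∀ q ∈ S i, sl.bracket q x = 0) : ∀ q ∈ ⨆ i, S i, sl.bracket q x = 0 :=
  fun _ hq => (iSup_le h : ⨆ i, S i ≤ LinearMap.ker (sl.bracket.flip x)) hq

lemma IsGraded.eq_zero_of_forall_homogeneous {S Q : Submodule ℂ L} (hS : sl.IsGraded S)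
    (hQ : sl.IsGraded Q)
    (h : ∀ x ∈ S, sl.IsHomogeneous x → (∀ q ∈ Q, sl.bracket q x = 0) → x = 0) :
    ∀ x ∈ S, (∀ q ∈ Q, sl.bracket q x = 0) → x = 0 := by
  intro x hx hQx
  obtain ⟨xe, ⟨hxeS, hxe⟩, xo, ⟨hxoS, hxo⟩, rfl⟩ := Submodule.mem_sup.mp (hS hx)
  have hQ0 : Q ≤ LinearMap.ker (sl.bracket.flip xe) ⊓ LinearMap.ker (sl.bracket.flip xo) := by
    refine hQ.le_of_homogeneous fun q hq hqh => ?_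
    have hsum : sl.bracket q xe + sl.bracket q xo = 0 := by rw [← map_add]; exact hQx q hq
    rcases hqh with hqe | hqo
    · exact eq_zero_of_even_add_odd_eq_zero (sl.ee_mem q hqe xe hxe) (sl.eo_mem q hqe xo hxo) hsum
    · exact (eq_zero_of_even_add_odd_eq_zero (sl.oo_mem q hqo xo hxo) (sl.oe_mem q hqo xe hxe)
        ((add_comm _ _).trans hsum)).symm
  rw [h xe hxeS (Or.inl hxe) fun q hq => (hQ0 hq).1, h xo hxoS (Or.inr hxo) fun q hq => (hQ0 hq).2,
    add_zero]

lemma le_leftStabilizer_lieSpan {H P : Submodule ℂ L} (hH : sl.IsGraded H) (hP : sl.IsGraded P)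
    (hHP : ∀ t ∈ H, ∀ p ∈ P, sl.bracket t p ∈ P) :
    H ⊔ lieSpan sl.bracket P ≤ sl.leftStabilizer (lieSpan sl.bracket P) :=
  sup_le (hH.le_of_homogeneous fun t ht hth =>
      hP.mem_leftStabilizer_lieSpan hth fun p hp => le_lieSpan P (hHP t ht p hp))
    fun _ ha => mem_leftStabilizer.mpr fun _ hv => bracket_mem_lieSpan ha hv

lemma le_leftStabilizer_adSpan_of_bracket_eq_zero {H P Q : Submodule ℂ L} (hH : sl.IsGraded H)
    (hP : sl.IsGraded P) (hQ : sl.IsGraded Q) (hHQ : ∀ t ∈ H, ∀ q ∈ Q, sl.bracket t q ∈ Q)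
    (hQP : ∀ q ∈ Q, ∀ p ∈ P, sl.bracket q p ∈ H) {x : L} (hQx : ∀ q ∈ Q, sl.bracket q x = 0) :
    Q ≤ sl.leftStabilizer (sl.adSpan (H ⊔ lieSpan sl.bracket P) x) := by
  set J := sl.adSpan (H ⊔ lieSpan sl.bracket P) x
  have hAJ : H ⊔ lieSpan sl.bracket P ≤ sl.leftStabilizer J := le_leftStabilizer_adSpan _ x
  have hQH : ∀ q ∈ Q, ∀ t ∈ H, sl.bracket q t ∈ Q := bracket_mem_swap hH hQ hHQ
  have hHT : H ≤ sl.leftStabilizer (J ⊓ sl.colon Q J) :=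
    hH.le_of_homogeneous fun t ht hth =>
      hQ.mem_leftStabilizer_inf_colon hth (hAJ (Submodule.mem_sup_left ht))
        fun v hv q hq => mem_colon.mp hv.2 _ (hQH q hq t ht)
  have hPT : P ≤ sl.leftStabilizer (J ⊓ sl.colon Q J) :=
    hP.le_of_homogeneous fun p hp hph =>
      hQ.mem_leftStabilizer_inf_colon hph (hAJ (Submodule.mem_sup_right (le_lieSpan P hp)))
        fun v hv q hq => mem_leftStabilizer.mp (hAJ (Submodule.mem_sup_left (hQP q hq p hp))) v
          hv.1
  have hJT : J ≤ J ⊓ sl.colon Q J :=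
    adSpan_le ⟨mem_adSpan_self _ x, mem_colon.mpr fun q hq => (hQx q hq).symm ▸ J.zero_mem⟩
      (sup_le hHT (hP.lieSpan_le_leftStabilizer hPT))
  exact fun q hq => mem_leftStabilizer.mpr fun v hv => mem_colon.mp (hJT hv).2 q hq

variable (sl) in
def weightSpace (H : Submodule ℂ L) (χ : H → ℂ) : Submodule ℂ L :=
  ⨅ t : H, Module.End.eigenspace (sl.bracket t) (χ t)

lemma mem_weightSpace {H : Submodule ℂ L} {χ : H → ℂ} {v : L} :
    v ∈ sl.weightSpace H χ ↔ ∀ t : H, sl.bracket t v = χ t • v := by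
  simp [weightSpace]

lemma bracket_mem_weightSpace {H : Submodule ℂ L} (hH : H ≤ sl.even) {χ ψ : H → ℂ} {x y : L}
    (hx : x ∈ sl.weightSpace H χ) (hy : y ∈ sl.weightSpace H ψ) :
    sl.bracket x y ∈ sl.weightSpace H (χ + ψ) :=
  mem_weightSpace.mpr fun t => by
    rw [sl.jacobi_e t (hH t.2) x y, mem_weightSpace.mp hx t, mem_weightSpace.mp hy t, map_smul,
      LinearMap.smul_apply, map_smul, Pi.add_apply, add_smul]

lemma iSupIndep_weightSpace {H : Submodule ℂ L} (hH : H ≤ sl.even)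
    (hcomm : ∀ t ∈ H, ∀ s ∈ H, sl.bracket t s = 0) : iSupIndep (sl.weightSpace H) := by
  have hc : ∀ t s : H, Commute (sl.bracket t) (sl.bracket s) := fun t s =>
    LinearMap.ext fun v => by
      simp only [Module.End.mul_apply]
      rw [sl.jacobi_e t (hH t.2) s v, hcomm t t.2 s s.2, map_zero, LinearMap.zero_apply,
        zero_add]
  exact (Module.End.independent_iInf_maxGenEigenspace_of_forall_mapsTo _
    fun t s μ => Module.End.mapsTo_maxGenEigenspace_of_comm (hc s t) μ).mono
      fun _ => iInf_mono fun _ => Module.End.eigenspace_le_maxGenEigenspace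

theorem lieSpan_inf_weightSpace_zero_eq_bot {H : Submodule ℂ L} (hH : H ≤ sl.even)
    (hcomm : ∀ t ∈ H, ∀ s ∈ H, sl.bracket t s = 0) {ι : Type*} [Fintype ι]
    {w : ι → H →ₗ[ℂ] ℂ} (hw : LinearIndependent ℂ w) {P : ι → Submodule ℂ L}
    (hP : ∀ i, P i ≤ sl.weightSpace H (w i)) :
    lieSpan sl.bracket (⨆ i, P i) ⊓ sl.weightSpace H 0 = ⊥ := by
  classical
  let χ : (ι → ℕ) → H → ℂ := fun c => ⇑(∑ i, (c i : ℂ) • w i)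
  have hχ_single : ∀ i, χ (Pi.single i 1) = w i := fun i => by simp [χ, Pi.single_apply]
  have hχ_add : ∀ c c', χ (c + c') = χ c + χ c' := fun c c' => by
    funext t
    simp [χ, add_mul, Finset.sum_add_distrib]
  have hχ_ne : ∀ c, c ≠ 0 → χ c ≠ 0 := fun c hc h => hc <| funext fun i => by
    exact_mod_cast Fintype.linearIndependent_iff.mp hw (fun i => (c i : ℂ))
      (LinearMap.ext fun t => congrFun h t) i
  let M := ⨆ (c : ι → ℕ) (_ : c ≠ 0), sl.weightSpace H (χ c)
  have hPM : ∀ i, P i ≤ M := fun i => (hP i).trans <|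
    hχ_single i ▸ le_iSup₂_of_le (f := fun c (_ : c ≠ 0) => sl.weightSpace H (χ c))
      (Pi.single i 1) (by simp) le_rfl
  have hMM : ∀ x ∈ M, ∀ y ∈ M, sl.bracket x y ∈ M := by
    refine fun x hx y hy => Submodule.map₂_le.mp ?_ x hx y hy
    simp only [M, Submodule.map₂_iSup_left, Submodule.map₂_iSup_right, iSup_le_iff]
    intro c hc c' _
    refine Submodule.map₂_le.mpr fun x hx y hy => ?_
    refine le_iSup₂_of_le (f := fun c (_ : c ≠ 0) => sl.weightSpace H (χ c)) (c' + c)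
      (fun h => hc (funext fun i => (Nat.add_eq_zero_iff.mp (congrFun h i)).2)) le_rfl ?_
    rw [hχ_add]
    exact bracket_mem_weightSpace hH hx hy
  have hMne : M ≤ ⨆ ψ ∈ {ψ : H → ℂ | ψ ≠ 0}, sl.weightSpace H ψ :=
    iSup₂_le fun c hc => le_iSup₂_of_le (f := fun ψ (_ : ψ ∈ {ψ : H → ℂ | ψ ≠ 0}) =>
      sl.weightSpace H ψ) _ (hχ_ne c hc) le_rfl
  exact disjoint_iff.mp <| ((iSupIndep_weightSpace hH hcomm).disjoint_biSup
    (by simp : (0 : H → ℂ) ∉ {ψ : H → ℂ | ψ ≠ 0})).symm.mono_left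
      ((lieSpan_le (iSup_le hPM) hMM).trans hMne)

theorem eq_zero_of_mem_lieSpan_of_bracket_eq_zero {H P Q : Submodule ℂ L} (hH : sl.IsGraded H)
    (hP : sl.IsGraded P) (hQ : sl.IsGraded Q) (hHP : ∀ t ∈ H, ∀ p ∈ P, sl.bracket t p ∈ P)
    (hHQ : ∀ t ∈ H, ∀ q ∈ Q, sl.bracket t q ∈ Q) (hQP : ∀ q ∈ Q, ∀ p ∈ P, sl.bracket q p ∈ H)
    (hPH : lieSpan sl.bracket P ⊓ H = ⊥)
    (hred : ∀ I : Submodule ℂ L, IsBracketIdeal sl.bracket I → I ⊓ H = ⊥ → I = ⊥)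
    (htri : lieSpan sl.bracket Q ⊔ (H ⊔ lieSpan sl.bracket P) = ⊤) :
    ∀ x ∈ lieSpan sl.bracket P, (∀ q ∈ Q, sl.bracket q x = 0) → x = 0 := by
  refine hP.isGraded_lieSpan.eq_zero_of_forall_homogeneous hQ fun x hx hxh hQx => ?_
  set J := sl.adSpan (H ⊔ lieSpan sl.bracket P) x
  have hJP : J ≤ lieSpan sl.bracket P := adSpan_le hx (le_leftStabilizer_lieSpan hH hP hHP)
  have hJ : sl.leftStabilizer J = ⊤ := top_unique <| htri ▸ sup_le
    (hQ.lieSpan_le_leftStabilizer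
      (le_leftStabilizer_adSpan_of_bracket_eq_zero hH hP hQ hHQ hQP hQx))
    (le_leftStabilizer_adSpan _ x)
  have hJ0 : J = ⊥ := hred J ((hH.sup hP.isGraded_lieSpan).isGraded_adSpan hxh |>.isBracketIdeal hJ)
    (eq_bot_mono (inf_le_inf_right H hJP) hPH)
  exact (Submodule.mem_bot ℂ).mp (hJ0 ▸ mem_adSpan_self _ x)

end SuperLie

namespace CartanDatum

open SuperLie

variable {L : Type*} [AddCommGroup L] [Module ℂ L] (D : CartanDatum L)

lemma isGraded_h : D.sl.IsGraded D.h :=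
  (isGraded_of_le_even D.hE_le).sup (isGraded_of_le_odd D.hO_le)

lemma isGraded_iSup_gp : D.sl.IsGraded (⨆ i, D.gp i) :=
  isGraded_iSup fun i => (D.gp_graded i).le

lemma isGraded_iSup_gm : D.sl.IsGraded (⨆ i, D.gm i) :=
  isGraded_iSup fun i => (D.gm_graded i).le

lemma bracket_h_iSup_gp_mem : ∀ t ∈ D.h, ∀ p ∈ ⨆ i, D.gp i, D.sl.bracket t p ∈ ⨆ i, D.gp i :=
  fun t ht _ hp => (iSup_le fun i p hp => Submodule.mem_iSup_of_mem i (D.gp_mod i t ht p hp) :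
    ⨆ i, D.gp i ≤ (⨆ i, D.gp i).comap (D.sl.bracket t)) hp

lemma bracket_h_iSup_gm_mem : ∀ t ∈ D.h, ∀ q ∈ ⨆ i, D.gm i, D.sl.bracket t q ∈ ⨆ i, D.gm i :=
  fun t ht _ hq => (iSup_le fun i q hq => Submodule.mem_iSup_of_mem i (D.gm_mod i t ht q hq) :
    ⨆ i, D.gm i ≤ (⨆ i, D.gm i).comap (D.sl.bracket t)) hq

lemma bracket_iSup_gp_iSup_gm_mem :
    ∀ x ∈ ⨆ i, D.gp i, ∀ y ∈ ⨆ i, D.gm i, D.sl.bracket x y ∈ D.h := by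
  refine Submodule.map₂_le.mp ?_
  simp only [Submodule.map₂_iSup_left, Submodule.map₂_iSup_right, iSup_le_iff]
  intro j i
  refine Submodule.map₂_le.mpr fun x hx y hy => ?_
  obtain rfl | hij := eq_or_ne i j
  · exact D.pair_mem i x hx y hy
  · exact D.pair_ne i j hij x hx y hy ▸ D.h.zero_mem

lemma bracket_iSup_gm_iSup_gp_mem :
    ∀ y ∈ ⨆ i, D.gm i, ∀ x ∈ ⨆ i, D.gp i, D.sl.bracket y x ∈ D.h :=
  bracket_mem_swap D.isGraded_iSup_gp D.isGraded_iSup_gm D.bracket_iSup_gp_iSup_gm_mem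

lemma bracket_hE_hE : ∀ t ∈ D.hE, ∀ s ∈ D.hE, D.sl.bracket t s = 0 :=
  fun t ht s hs => D.quasitoral t ht s (Submodule.mem_sup_left hs)

lemma h_le_weightSpace_zero : D.h ≤ D.sl.weightSpace D.hE 0 :=
  fun v hv => mem_weightSpace.mpr fun t => by
    rw [D.quasitoral t t.2 v hv, Pi.zero_apply, zero_smul]

lemma Np_inf_h : D.Np ⊓ D.h = ⊥ :=
  eq_bot_mono (inf_le_inf_left _ D.h_le_weightSpace_zero)
    (lieSpan_inf_weightSpace_zero_eq_bot D.hE_le D.bracket_hE_hE D.indep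
      fun i v hv => mem_weightSpace.mpr fun t => D.gp_wt i t t.2 v hv)

lemma Nm_inf_h : D.Nm ⊓ D.h = ⊥ :=
  eq_bot_mono (inf_le_inf_left _ D.h_le_weightSpace_zero)
    (lieSpan_inf_weightSpace_zero_eq_bot D.hE_le D.bracket_hE_hE D.indep.neg
      fun i v hv => mem_weightSpace.mpr fun t => by simpa using D.gm_wt i t t.2 v hv)

end CartanDatum

theorem gA_no_lowest_weight_vectors
    {L : Type} [AddCommGroup L] [Module ℂ L] (D : CartanDatum L)
    (hred : D.Reduced) (htri : D.Triangular) :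
    (∀ x ∈ D.Np, (∀ i, ∀ y ∈ D.gm i, D.sl.bracket y x = 0) → x = 0) ∧
    (∀ y ∈ D.Nm, (∀ i, ∀ x ∈ D.gp i, D.sl.bracket x y = 0) → y = 0) := by
  have htri' : D.Np ⊔ (D.h ⊔ D.Nm) = ⊤ := by
    rw [← htri, sup_comm D.h, sup_left_comm, sup_comm D.Np]
  refine ⟨fun x hx hx0 => ?_, fun y hy hy0 => ?_⟩
  · exact SuperLie.eq_zero_of_mem_lieSpan_of_bracket_eq_zero D.isGraded_h D.isGraded_iSup_gp
      D.isGraded_iSup_gm D.bracket_h_iSup_gp_mem D.bracket_h_iSup_gm_mem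
      D.bracket_iSup_gm_iSup_gp_mem D.Np_inf_h hred htri x hx
      (SuperLie.bracket_eq_zero_of_mem_iSup hx0)
  · exact SuperLie.eq_zero_of_mem_lieSpan_of_bracket_eq_zero D.isGraded_h D.isGraded_iSup_gm
      D.isGraded_iSup_gp D.bracket_h_iSup_gm_mem D.bracket_h_iSup_gp_mem
      D.bracket_iSup_gp_iSup_gm_mem D.Nm_inf_h hred htri' y hy
      (SuperLie.bracket_eq_zero_of_mem_iSup hy0)
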